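/- Range reduction of primal feasible points: Let P ∈ ℝ^{2L×(L−1)} and Q ∈ ℝ^{2L×(L+1)} be the matrices defined below. Every matrix M feasible for the primal 2-marginal SDP satisfies M P = 0, and consequently can be written in the form M = Q M̃ Qᵀ for some symmetric positive semidefinite M̃ ∈ ℝ^{(L+1)×(L+1)}. -/

import Mathlib

open Matrix BigOperators

noncomputable section

abbrev Idx (L : ℕ) := Fin L × Fin 2

/-- The fixed 1-marginal `μ_p^(1) = (1 - ρ_p, ρ_p)ᵀ`. -/
def mu1 {L : ℕ} (ρ : Fin L → ℝ) (p : Fin L) (t : Fin 2) : ℝ :=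
  if t = 0 then 1 - ρ p else ρ p

/-- Feasibility for the primal 2-marginal SDP. -/
def PrimalFeasible {L : ℕ} (ρ : Fin L → ℝ) (M : Matrix (Idx L) (Idx L) ℝ) : Prop :=
  M.PosSemidef ∧
  (∀ p q : Fin L, p ≠ q → ∀ t u : Fin 2, 0 ≤ M (p, t) (q, u)) ∧
  (∀ p q : Fin L, p ≠ q → ∀ t : Fin 2, ∑ u : Fin 2, M (p, t) (q, u) = mu1 ρ p t) ∧
  (∀ p : Fin L, ∀ t u : Fin 2, M (p, t) (p, u) = if t = u then mu1 ρ p t else 0)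

/-- The matrix `P ∈ ℝ^{2L×(L−1)}` whose `i`-th column has `i`-th 2-block `1₂`,
`(i+1)`-st 2-block `-1₂`, and zero blocks otherwise. -/
def Pmat (L : ℕ) : Matrix (Idx L) (Fin (L - 1)) ℝ :=
  fun a i =>
    if (a.1 : ℕ) = (i : ℕ) then 1
    else if (a.1 : ℕ) = (i : ℕ) + 1 then -1 else 0

/-- The matrix `Q ∈ ℝ^{2L×(L+1)}` whose `p`-th column (`p = 1,…,L`) has `p`-th
2-block `½(1,−1)ᵀ` and zero blocks otherwise, and whose `(L+1)`-st column has every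
2-block equal to `½(1,1)ᵀ`. -/
def Qmat (L : ℕ) : Matrix (Idx L) (Fin (L + 1)) ℝ :=
  fun a j =>
    if (j : ℕ) = (a.1 : ℕ) then (if a.2 = 0 then 1 / 2 else -(1 / 2))
    else if (j : ℕ) = L then 1 / 2 else 0

/-! Each row `x` of a feasible `M` has the same 2-block sum `x (q, 0) + x (q, 1)` for every `q`
(namely an entry of `μ^(1)`). Such a vector is orthogonal to the columns of `P`, whence `M P = 0`,
and lies in the range of `Q`, so it is fixed by the orthogonal projection `Π = Q Q⁺` onto that
range. As `M` and `Π` are symmetric, `M = Π M Π = Q (Q⁺ M Q⁺ᵀ) Qᵀ`, and `Q⁺ M Q⁺ᵀ` is positive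
semidefinite. -/

/-- `Q⁺ = (QᵀQ)⁻¹ Qᵀ`: the columns of `Q` are orthogonal, with squared norm `1/2`, except the
last one, whose squared norm is `L/2`. -/
def Qpinv (L : ℕ) : Matrix (Fin (L + 1)) (Idx L) ℝ :=
  diagonal (Fin.lastCases (2 / L) fun _ => 2 : Fin (L + 1) → ℝ) * (Qmat L)ᵀ

lemma sum_fin_ite_val_eq_one {L n : ℕ} (h : n < L) :
    ∑ q : Fin L, (if (q : ℕ) = n then (1 : ℝ) else 0) = 1 := by
  rw [Fin.sum_univ_eq_sum_range (fun k => if k = n then (1 : ℝ) else 0) L,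
    Finset.sum_ite_eq', if_pos (Finset.mem_range.2 h)]

lemma Pmat_apply (L : ℕ) (a : Idx L) (i : Fin (L - 1)) :
    Pmat L a i = (if (a.1 : ℕ) = i then 1 else 0) - (if (a.1 : ℕ) = i + 1 then 1 else 0) := by
  unfold Pmat
  split_ifs <;> first | omega | norm_num

lemma Qmat_castSucc (L : ℕ) (a : Idx L) (p : Fin L) :
    Qmat L a p.castSucc = if p = a.1 then (if a.2 = 0 then 1 / 2 else -(1 / 2)) else 0 := by
  simp only [Qmat, Fin.val_castSucc, Fin.val_inj, p.isLt.ne, if_false]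

lemma Qmat_last (L : ℕ) (a : Idx L) : Qmat L a (Fin.last L) = 1 / 2 := by
  simp only [Qmat, Fin.val_last, a.1.isLt.ne', if_false, if_true]

section BlockBalanced

variable {L : ℕ} {x : Idx L → ℝ} {c : ℝ}

lemma sum_mul_of_blockSum_eq (hx : ∀ q, ∑ u, x (q, u) = c) (f : Fin L → ℝ) :
    ∑ a, x a * f a.1 = c * ∑ q, f q := by
  rw [Fintype.sum_prod_type, Finset.mul_sum]
  exact Finset.sum_congr rfl fun q _ => by rw [← hx q, Finset.sum_mul]

lemma vecMul_Pmat_eq_zero (hx : ∀ q, ∑ u, x (q, u) = c) : x ᵥ* Pmat L = 0 := by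
  ext i
  have hi := i.isLt
  change ∑ a, x a * Pmat L (a.1, 0) i = 0
  rw [sum_mul_of_blockSum_eq hx fun q => Pmat L (q, 0) i]
  simp only [Pmat_apply, Finset.sum_sub_distrib,
    sum_fin_ite_val_eq_one (show (i : ℕ) < L by omega),
    sum_fin_ite_val_eq_one (show (i : ℕ) + 1 < L by omega), sub_self, mul_zero]

lemma vecMul_Qmat_castSucc (p : Fin L) :
    (x ᵥ* Qmat L) p.castSucc = (x (p, 0) - x (p, 1)) / 2 := by
  simp only [vecMul, dotProduct, Qmat_castSucc, Fin.isValue, one_div, mul_ite, mul_neg, mul_zero,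
    Fintype.sum_prod_type, Finset.sum_ite_irrel, Fin.sum_univ_two, ↓reduceIte, one_ne_zero,
    Finset.sum_const_zero, Finset.sum_ite_eq, Finset.mem_univ]
  ring

lemma vecMul_Qmat_last : (x ᵥ* Qmat L) (Fin.last L) = (∑ a, x a) / 2 := by
  simp only [vecMul, dotProduct, Qmat_last, ← Finset.sum_mul]
  ring

lemma vecMul_Qmat_mul_Qpinv (hx : ∀ q, ∑ u, x (q, u) = c) : x ᵥ* (Qmat L * Qpinv L) = x := by
  ext ⟨q, u⟩
  have hL : (L : ℝ) ≠ 0 := Nat.cast_ne_zero.2 (Fin.pos q).ne'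
  have htotal : ∑ a, x a = L * (x (q, 0) + x (q, 1)) := by
    simp [Fintype.sum_prod_type, hx, ← Fin.sum_univ_two (fun u => x (q, u))]
  rw [Qpinv, ← Matrix.mul_assoc, ← vecMul_vecMul, ← vecMul_vecMul, vecMul_transpose]
  simp only [mulVec, dotProduct, vecMul_diagonal, Fin.sum_univ_castSucc, vecMul_Qmat_castSucc,
    vecMul_Qmat_last, Qmat_castSucc, Qmat_last, Fin.lastCases_castSucc, Fin.lastCases_last, htotal,
    ite_mul, zero_mul, Finset.sum_ite_eq', Finset.mem_univ, if_true]
  fin_cases u <;> simp only [Fin.zero_eta, Fin.mk_one, Fin.isValue, ↓reduceIte, one_ne_zero] <;>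
    field_simp <;> ring

end BlockBalanced

lemma transpose_Qmat_mul_Qpinv (L : ℕ) : (Qmat L * Qpinv L)ᵀ = Qmat L * Qpinv L := by
  simp only [Qpinv, transpose_mul, transpose_transpose, diagonal_transpose, Matrix.mul_assoc]

lemma eq_mul_mul_transpose_of_mul_eq {m n : Type*} [Fintype m] [Fintype n]
    {M : Matrix n n ℝ} (hM : M.IsSymm) {A : Matrix n m ℝ} {B : Matrix m n ℝ}
    (hAB : (A * B)ᵀ = A * B) (h : M * (A * B) = M) : M = A * (B * M * Bᵀ) * Aᵀ := by
  have hleft : A * B * M = M :=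
    calc A * B * M = (M * (A * B))ᵀ := by rw [transpose_mul, hAB, hM.eq]
      _ = M := by rw [h, hM.eq]
  calc M = A * B * M * (A * B)ᵀ := by rw [hAB, hleft, h]
    _ = A * (B * M * Bᵀ) * Aᵀ := by simp only [transpose_mul, Matrix.mul_assoc]

lemma PrimalFeasible.sum_block {L : ℕ} {ρ : Fin L → ℝ} {M : Matrix (Idx L) (Idx L) ℝ}
    (hM : PrimalFeasible ρ M) (a : Idx L) (q : Fin L) :
    ∑ u, M a (q, u) = mu1 ρ a.1 a.2 := by
  obtain ⟨-, -, hmarg, hdiag⟩ := hM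
  by_cases h : a.1 = q
  · subst h
    simp [hdiag, Finset.sum_ite_eq]
  · exact hmarg a.1 q h a.2

theorem range_reduction_general (L : ℕ) (ρ : Fin L → ℝ)
    (M : Matrix (Idx L) (Idx L) ℝ) (hM : PrimalFeasible ρ M) :
    M * Pmat L = 0 ∧
    ∃ Mt : Matrix (Fin (L + 1)) (Fin (L + 1)) ℝ,
      Mt.PosSemidef ∧ M = Qmat L * Mt * (Qmat L)ᵀ := by
  have hMP : M * Pmat L = 0 := by
    ext a i
    exact congrFun (vecMul_Pmat_eq_zero (hM.sum_block a)) i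
  have hMproj : M * (Qmat L * Qpinv L) = M := by
    ext a b
    exact congrFun (vecMul_Qmat_mul_Qpinv (hM.sum_block a)) b
  refine ⟨hMP, Qpinv L * M * (Qpinv L)ᵀ, ?_, ?_⟩
  · simpa using hM.1.mul_mul_conjTranspose_same (Qpinv L)
  · exact eq_mul_mul_transpose_of_mul_eq hM.1.isHermitian (transpose_Qmat_mul_Qpinv L) hMproj

/-- Range reduction of primal feasible points: every primal feasible `M` satisfies
`MP = 0` and can be written `M = Q M̃ Qᵀ` with `M̃` symmetric positive semidefinite. -/
theorem range_reduction (L : ℕ) (hL : 2 ≤ L) (ρ : Fin L → ℝ)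
    (hρ : ∀ p, 0 ≤ ρ p ∧ ρ p ≤ 1)
    (M : Matrix (Idx L) (Idx L) ℝ) (hM : PrimalFeasible ρ M) :
    M * Pmat L = 0 ∧
    ∃ Mt : Matrix (Fin (L + 1)) (Fin (L + 1)) ℝ,
      Mt.PosSemidef ∧ M = Qmat L * Mt * (Qmat L)ᵀ :=
  range_reduction_general L ρ M hM
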